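/- Let X be a κ-step subshift of Q^M, let Y be a subshift of Q^M, let Δ be a κ-local map from X to Y, let A be a subset of M, and let p and p' be two patterns in X_{A^{+2κ}} such that p↾_{∂_{2κ}⁺A} = p'↾_{∂_{2κ}⁺A} and Δ_{A^{+2κ}}^-(p) = Δ_{A^{+2κ}}^-(p'). Let c be a point of X and let T be a subset of M such that the family (t ↝ A^{+2κ})_{t∈T} is pairwise disjoint and p occurs at t in c for every t ∈ T. Define c' to be the point of Q^M that agrees with c on M ∖ ⋃_{t∈T} (t ↝ A^{+2κ}) and equals t ⊛' p' on t ↝ A^{+2κ} for each t ∈ T. Then for each t ∈ T the pattern p' occurs at t in c', c' ∈ X, and Δ(c) = Δ(c'); in particular, if p ≠ p', then for each t ∈ T the pattern p does not occur at t in c'. -/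
import Mathlib


open Filter Set

namespace GoE

variable {G M Q : Type*}

/-- A left homogeneous space `⟨M, G, ▷⟩` together with a coordinate system
`⟨m₀, (g_{m₀,m})_{m∈M}⟩`: a cell space with finite stabiliser `G₀` of `m₀`. -/
structure CellSpace (G M : Type*) [Group G] where
  act : G → M → M
  one_act : ∀ m : M, act 1 m = m
  mul_act : ∀ (g h : G) (m : M), act (g * h) m = act g (act h m)
  transitive : ∀ m m' : M, ∃ g : G, act g m = m'
  m0 : M
  coord : M → G
  coord_act : ∀ m : M, act (coord m) m0 = m
  stab_finite : {g : G | act g m0 = m0}.Finite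

variable [Group G]

namespace CellSpace

/-- Membership in the stabiliser `G₀` of `m₀`. -/
def stab (R : CellSpace G M) (g : G) : Prop := R.act g R.m0 = R.m0

/-- The induced right semi-action `m ↝ gG₀ = g_{m₀,m} g ▷ m₀`, on representatives. -/
def sAct (R : CellSpace G M) (m : M) (g : G) : M := R.act (R.coord m * g) R.m0

/-- `m ↝ ι n` where `ι : M → G/G₀`, `n ↦ G_{m₀,n}` is the canonical identification. -/
def nAct (R : CellSpace G M) (m n : M) : M := R.act (R.coord m * R.coord n) R.m0

/-- `S ⊆ G` represents a finite symmetric right generating set of cosets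
(`G₀ · S ⊆ S`, `S⁻¹ ⊆ S`, and `S` generates). -/
structure IsRightGenSet (R : CellSpace G M) (S : Set G) : Prop where
  finite : S.Finite
  saturated : ∀ s ∈ S, ∀ g₀ : G, R.stab g₀ → s * g₀ ∈ S
  stab_mul : ∀ g₀ : G, R.stab g₀ → ∀ s ∈ S, g₀ * s ∈ S
  symm : ∀ s ∈ S, s⁻¹ ∈ S
  generates : ∀ m : M, ∃ (k : ℕ) (f : ℕ → M), f 0 = R.m0 ∧ f k = m ∧
    ∀ i < k, ∃ s ∈ S, f (i + 1) = R.sAct (f i) s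

/-- There is an `S`-path of length `n` from `m` to `m'` in the `S`-Cayley graph. -/
def Chain (R : CellSpace G M) (S : Set G) (m m' : M) (n : ℕ) : Prop :=
  ∃ f : ℕ → M, f 0 = m ∧ f n = m' ∧ ∀ i < n, ∃ s ∈ S, f (i + 1) = R.sAct (f i) s

/-- The `S`-metric `d`. -/
noncomputable def dist (R : CellSpace G M) (S : Set G) (m m' : M) : ℕ :=
  sInf {n : ℕ | R.Chain S m m' n}

/-- The ball `B(m, ρ)` of radius `ρ` centred at `m`. -/
noncomputable def ball (R : CellSpace G M) (S : Set G) (m : M) (ρ : ℕ) : Set M :=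
  {m' : M | R.dist S m m' ≤ ρ}

/-- The `θ`-interior `A^{-θ}` of `A`. -/
noncomputable def inter (R : CellSpace G M) (S : Set G) (A : Set M) (θ : ℕ) : Set M :=
  {m ∈ A | R.ball S m θ ⊆ A}

/-- The `θ`-closure `A^{+θ}` of `A`. -/
noncomputable def clos (R : CellSpace G M) (S : Set G) (A : Set M) (θ : ℕ) : Set M :=
  {m : M | (R.ball S m θ ∩ A).Nonempty}

/-- The external `θ`-boundary `∂θ⁺A = A^{+θ} ∖ A`. -/
noncomputable def extB (R : CellSpace G M) (S : Set G) (A : Set M) (θ : ℕ) : Set M :=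
  R.clos S A θ \ A

/-- The internal `θ`-boundary `∂θ⁻A = A ∖ A^{-θ}`. -/
noncomputable def intB (R : CellSpace G M) (S : Set G) (A : Set M) (θ : ℕ) : Set M :=
  A \ R.inter S A θ

/-- The `θ`-boundary `∂θA = A^{+θ} ∖ A^{-θ}`. -/
noncomputable def bdry (R : CellSpace G M) (S : Set G) (A : Set M) (θ : ℕ) : Set M :=
  R.clos S A θ \ R.inter S A θ

end CellSpace

/-- The set `X_A` of restrictions to `A` of the elements of `X`. -/
def restr (A : Set M) (X : Set (M → Q)) : Set (A → Q) :=
  (fun x : M → Q => A.restrict x) '' X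

/-- The pattern `p` (with domain `A`) semi-occurs in the configuration `c`:
there is `h ∈ H` with `h ⊛ p = c↾_{h ▷ dom p}`. -/
def SemiOccurs (R : CellSpace G M) (H : Subgroup G) {A : Set M} (p : A → Q)
    (c : M → Q) : Prop :=
  ∃ h ∈ H, ∀ a : A, c (R.act h ↑a) = p a

/-- The pattern `p` (with domain `A`) occurs at `t` in the configuration `c`:
`t ⊛' p = c↾_{t ↝ A}`. -/
def OccursAt (R : CellSpace G M) {A : Set M} (p : A → Q) (t : M) (c : M → Q) : Prop :=
  ∀ a : A, c (R.nAct t ↑a) = p a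

/-- The pattern `p` is allowed in `X`: it semi-occurs in some point of `X`. -/
def Allowed (R : CellSpace G M) (H : Subgroup G) (X : Set (M → Q)) {A : Set M}
    (p : A → Q) : Prop :=
  ∃ x ∈ X, SemiOccurs R H p x

/-- The set `⟨𝔉⟩` generated by a set `𝔉` of forbidden patterns. -/
def Generated (R : CellSpace G M) (H : Subgroup G) (𝔉 : Set (Σ A : Set M, A → Q)) :
    Set (M → Q) :=
  {c : M → Q | ∀ f ∈ 𝔉, ¬ SemiOccurs R H f.2 c}

/-- `X` is a subshift of `Q^M`: it is generated by a set of blocks. -/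
def IsSubshift (R : CellSpace G M) (H : Subgroup G) (X : Set (M → Q)) : Prop :=
  ∃ 𝔉 : Set (Σ A : Set M, A → Q), (∀ f ∈ 𝔉, f.1.Finite) ∧ X = Generated R H 𝔉

/-- `X` is a subshift of finite type: it is generated by a finite set of blocks. -/
def IsSubshiftFT (R : CellSpace G M) (H : Subgroup G) (X : Set (M → Q)) : Prop :=
  ∃ 𝔉 : Set (Σ A : Set M, A → Q), 𝔉.Finite ∧ (∀ f ∈ 𝔉, f.1.Finite) ∧
    X = Generated R H 𝔉

/-- `X` is a `κ`-step subshift: it is generated by a set of `B(κ)`-blocks. -/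
def IsStep (R : CellSpace G M) (S : Set G) (H : Subgroup G) (X : Set (M → Q))
    (κ : ℕ) : Prop :=
  ∃ 𝔉 : Set (Σ A : Set M, A → Q), (∀ f ∈ 𝔉, f.1 = R.ball S R.m0 κ) ∧
    X = Generated R H 𝔉

/-- `X` is `κ`-strongly irreducible. -/
def IsStronglyIrr (R : CellSpace G M) (S : Set G) (H : Subgroup G)
    (X : Set (M → Q)) (κ : ℕ) : Prop :=
  ∀ (A B : Set M), A.Finite → B.Finite → ∀ (p : A → Q) (p' : B → Q),
    Allowed R H X p → Allowed R H X p' →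
    (∀ a ∈ A, ∀ b ∈ B, κ + 1 ≤ R.dist S a b) →
    ∃ x ∈ X, A.restrict x = p ∧ B.restrict x = p'

/-- `X` has `ρ`-bounded propagation. -/
def HasBoundedProp (R : CellSpace G M) (S : Set G) (X : Set (M → Q)) (ρ : ℕ) : Prop :=
  ∀ F : Set M, F.Finite → ∀ p : F → Q,
    (∀ f ∈ F, ∃ x ∈ X, ∀ (m : M) (hm : m ∈ R.ball S f ρ ∩ F), p ⟨m, hm.2⟩ = x m) →
    ∃ x ∈ X, F.restrict x = p

/-- `Δ` is a `κ`-local map from `X` to `Y`. -/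
def IsLocalMap (R : CellSpace G M) (S : Set G) (H : Subgroup G)
    (X Y : Set (M → Q)) (Δ : (M → Q) → (M → Q)) (κ : ℕ) : Prop :=
  Set.MapsTo Δ X Y ∧
  ∃ N : Set M, N ⊆ R.ball S R.m0 κ ∧
    (∀ g₀ : G, R.stab g₀ → ∀ n ∈ N, R.act g₀ n ∈ N) ∧
    ∃ δ : (N → Q) → Q,
      (∀ h₀ ∈ H, R.stab h₀ →
        ∀ ℓ ∈ restr N X, ∀ ℓ' : N → Q,
          (∀ (n : M) (hn : n ∈ N) (hn' : R.act h₀⁻¹ n ∈ N),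
            ℓ' ⟨n, hn⟩ = ℓ ⟨R.act h₀⁻¹ n, hn'⟩) →
          δ ℓ' = δ ℓ) ∧
      ∀ x ∈ X, ∀ m : M, Δ x m = δ (fun n : N => x (R.nAct m ↑n))

/-- `Δ` is pre-injective on `X`. -/
def PreInjective (X : Set (M → Q)) (Δ : (M → Q) → (M → Q)) : Prop :=
  ∀ x ∈ X, ∀ x' ∈ X, Δ x = Δ x' → {m : M | x m ≠ x' m}.Finite → x = x'

/-- The cell space `R` is right amenable: there is a finitely additive probability
measure on the power set of `M` that is semi-invariant under the right semi-action. -/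
def RightAmenable (R : CellSpace G M) : Prop :=
  ∃ μ : Set M → ℝ, (∀ A : Set M, 0 ≤ μ A) ∧ μ Set.univ = 1 ∧
    (∀ A B : Set M, Disjoint A B → μ (A ∪ B) = μ A + μ B) ∧
    ∀ (g : G) (A : Set M), Set.InjOn (fun m => R.sAct m g) A →
      μ ((fun m => R.sAct m g) '' A) = μ A

/-- `F` is a right Følner net in `R` (indexed by the directed set `I`). -/
def IsFolnerNet (R : CellSpace G M) (S : Set G) {I : Type*} [Preorder I]
    (F : I → Set M) : Prop :=
  (∀ i, (F i).Nonempty) ∧ (∀ i, (F i).Finite) ∧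
  ∀ ρ : ℕ, Tendsto (fun i => ((R.bdry S (F i) ρ).ncard : ℝ) / ((F i).ncard : ℝ))
    atTop (nhds 0)

/-- The entropy of `X ⊆ Q^M` with respect to the net `F`:
`limsup_i log|X_{F_i}| / |F_i|`. -/
noncomputable def entropy (R : CellSpace G M) (S : Set G) {I : Type*} [Preorder I]
    (F : I → Set M) (X : Set (M → Q)) : ℝ :=
  limsup (fun i => Real.log ((restr (F i) X).ncard : ℝ) / ((F i).ncard : ℝ)) atTop

/-- `T` is a `⟨θ, κ, θ'⟩`-tiling of `R`. -/
def IsTiling (R : CellSpace G M) (S : Set G) (θ κ θ' : ℕ) (T : Set M) : Prop :=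
  (∀ t ∈ T, ∀ t' ∈ T, t ≠ t' →
    ∀ a ∈ R.ball S t θ, ∀ b ∈ R.ball S t' θ, κ + 1 ≤ R.dist S a b) ∧
  ∀ m : M, ∃ t ∈ T, m ∈ R.ball S t θ'

/-- The action `h ⊛ c` of `h ∈ G` on configurations: `(h ⊛ c)(m) = c(h⁻¹ ▷ m)`. -/
def shiftAct (R : CellSpace G M) (h : G) (c : M → Q) : M → Q :=
  fun m => c (R.act h⁻¹ m)

namespace CellSpace

variable (R : CellSpace G M) (S : Set G)

lemma act_act_inv (g : G) (m : M) : R.act g (R.act g⁻¹ m) = m := by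
  rw [← R.mul_act, mul_inv_cancel, R.one_act]

lemma act_inv_act (g : G) (m : M) : R.act g⁻¹ (R.act g m) = m := by
  rw [← R.mul_act, inv_mul_cancel, R.one_act]

lemma nAct_eq (t n : M) : R.nAct t n = R.act (R.coord t) n := by
  rw [CellSpace.nAct, R.mul_act, R.coord_act]

lemma act_coord_inv (m : M) : R.act (R.coord m)⁻¹ m = R.m0 := by
  have h := R.act_inv_act (R.coord m) R.m0
  rwa [R.coord_act] at h

lemma chain_refl (m : M) : R.Chain S m m 0 :=
  ⟨fun _ => m, rfl, rfl, fun i hi => absurd hi (Nat.not_lt_zero i)⟩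

lemma chain_trans {m m' m'' : M} {n₁ n₂ : ℕ} (h₁ : R.Chain S m m' n₁)
    (h₂ : R.Chain S m' m'' n₂) : R.Chain S m m'' (n₁ + n₂) := by
  obtain ⟨f₁, hf₁0, hf₁n, hf₁⟩ := h₁
  obtain ⟨f₂, hf₂0, hf₂n, hf₂⟩ := h₂
  refine ⟨fun i => if i ≤ n₁ then f₁ i else f₂ (i - n₁), by simp [hf₁0], ?_, ?_⟩
  · by_cases h : n₂ = 0
    · subst h
      have : m' = m'' := hf₂0.symm.trans hf₂n
      simp [hf₁n, this]
    · simp only [if_neg (by omega : ¬ n₁ + n₂ ≤ n₁)]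
      have : n₁ + n₂ - n₁ = n₂ := by omega
      rw [this, hf₂n]
  · intro i hi
    by_cases h1 : i + 1 ≤ n₁
    · obtain ⟨s, hs, he⟩ := hf₁ i (by omega)
      refine ⟨s, hs, ?_⟩
      show (if i + 1 ≤ n₁ then f₁ (i + 1) else f₂ (i + 1 - n₁)) =
        R.sAct (if i ≤ n₁ then f₁ i else f₂ (i - n₁)) s
      rw [if_pos h1, if_pos (by omega : i ≤ n₁), he]
    · by_cases h2 : i ≤ n₁
      · have hi' : i = n₁ := by omega
        obtain ⟨s, hs, he⟩ := hf₂ 0 (by omega)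
        refine ⟨s, hs, ?_⟩
        show (if i + 1 ≤ n₁ then f₁ (i + 1) else f₂ (i + 1 - n₁)) =
          R.sAct (if i ≤ n₁ then f₁ i else f₂ (i - n₁)) s
        rw [if_neg h1, if_pos h2]
        subst hi'
        have h3 : i + 1 - i = 1 := by omega
        rw [h3, he, hf₂0, ← hf₁n]
      · obtain ⟨s, hs, he⟩ := hf₂ (i - n₁) (by omega)
        refine ⟨s, hs, ?_⟩
        show (if i + 1 ≤ n₁ then f₁ (i + 1) else f₂ (i + 1 - n₁)) =
          R.sAct (if i ≤ n₁ then f₁ i else f₂ (i - n₁)) s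
        rw [if_neg h1, if_neg h2]
        have : i + 1 - n₁ = (i - n₁) + 1 := by omega
        rw [this, he]

lemma edge_symm (hS : R.IsRightGenSet S) {s : G} (hs : s ∈ S) (m : M) :
    ∃ s' ∈ S, R.sAct (R.sAct m s) s' = m := by
  set m2 := R.sAct m s with hm2
  set g₀ := (R.coord m2)⁻¹ * (R.coord m * s) with hg₀
  have hstab : R.stab g₀ := by
    show R.act g₀ R.m0 = R.m0
    rw [hg₀, R.mul_act]
    show R.act (R.coord m2)⁻¹ m2 = R.m0
    exact R.act_coord_inv m2
  refine ⟨g₀ * s⁻¹, hS.stab_mul g₀ hstab s⁻¹ (hS.symm s hs), ?_⟩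
  show R.act (R.coord m2 * (g₀ * s⁻¹)) R.m0 = m
  have he : R.coord m2 * (g₀ * s⁻¹) = R.coord m := by
    rw [hg₀]; group
  rw [he, R.coord_act]

lemma edge_act (g : G) {s : G} (hs : s ∈ S) (hS : R.IsRightGenSet S) (m : M) :
    ∃ s' ∈ S, R.act g (R.sAct m s) = R.sAct (R.act g m) s' := by
  set g₀ := (R.coord (R.act g m))⁻¹ * (g * R.coord m) with hg₀
  have hstab : R.stab g₀ := by
    show R.act g₀ R.m0 = R.m0
    rw [hg₀, R.mul_act, R.mul_act, R.coord_act]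
    exact R.act_coord_inv (R.act g m)
  refine ⟨g₀ * s, hS.stab_mul g₀ hstab s hs, ?_⟩
  show R.act g (R.act (R.coord m * s) R.m0) = R.act (R.coord (R.act g m) * (g₀ * s)) R.m0
  rw [← R.mul_act]
  congr 1
  rw [hg₀]; group

lemma chain_symm (hS : R.IsRightGenSet S) {m m' : M} {n : ℕ}
    (h : R.Chain S m m' n) : R.Chain S m' m n := by
  obtain ⟨f, h0, hn, hstep⟩ := h
  refine ⟨fun i => f (n - i), by simp [hn], by simp [h0], ?_⟩
  intro i hi
  obtain ⟨s, hs, he⟩ := hstep (n - i - 1) (by omega)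
  have h1 : n - i - 1 + 1 = n - i := by omega
  rw [h1] at he
  obtain ⟨s', hs', he'⟩ := R.edge_symm S hS hs (f (n - i - 1))
  refine ⟨s', hs', ?_⟩
  show f (n - (i + 1)) = R.sAct (f (n - i)) s'
  have h2 : n - (i + 1) = n - i - 1 := by omega
  rw [h2, ← he', he]

lemma chain_act (hS : R.IsRightGenSet S) (g : G) {m m' : M} {n : ℕ}
    (h : R.Chain S m m' n) : R.Chain S (R.act g m) (R.act g m') n := by
  obtain ⟨f, h0, hn, hstep⟩ := h
  refine ⟨fun i => R.act g (f i), by simp only [h0], by simp only [hn], ?_⟩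
  intro i hi
  obtain ⟨s, hs, he⟩ := hstep i hi
  obtain ⟨s', hs', he'⟩ := R.edge_act S g hs hS (f i)
  refine ⟨s', hs', ?_⟩
  show R.act g (f (i + 1)) = R.sAct (R.act g (f i)) s'
  rw [he, he']

lemma chain_exists (hS : R.IsRightGenSet S) (m m' : M) : ∃ n, R.Chain S m m' n := by
  obtain ⟨k, f, h0, hk, hstep⟩ := hS.generates m
  obtain ⟨k', f', h0', hk', hstep'⟩ := hS.generates m'
  exact ⟨k + k', R.chain_trans S (R.chain_symm S hS ⟨f, h0, hk, hstep⟩)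
    ⟨f', h0', hk', hstep'⟩⟩

lemma dist_le {m m' : M} {n : ℕ} (h : R.Chain S m m' n) : R.dist S m m' ≤ n :=
  Nat.sInf_le h

lemma chain_dist (hS : R.IsRightGenSet S) (m m' : M) :
    R.Chain S m m' (R.dist S m m') :=
  Nat.sInf_mem (R.chain_exists S hS m m')

lemma dist_self (m : M) : R.dist S m m = 0 :=
  Nat.le_zero.mp (R.dist_le S (R.chain_refl S m))

lemma dist_triangle (hS : R.IsRightGenSet S) (m m' m'' : M) :
    R.dist S m m'' ≤ R.dist S m m' + R.dist S m' m'' :=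
  R.dist_le S (R.chain_trans S (R.chain_dist S hS m m') (R.chain_dist S hS m' m''))

lemma dist_symm (hS : R.IsRightGenSet S) (m m' : M) :
    R.dist S m m' = R.dist S m' m :=
  le_antisymm (R.dist_le S (R.chain_symm S hS (R.chain_dist S hS m' m)))
    (R.dist_le S (R.chain_symm S hS (R.chain_dist S hS m m')))

lemma dist_act (hS : R.IsRightGenSet S) (g : G) (m m' : M) :
    R.dist S (R.act g m) (R.act g m') = R.dist S m m' := by
  refine le_antisymm (R.dist_le S (R.chain_act S hS g (R.chain_dist S hS m m'))) ?_
  have h := R.dist_le S (R.chain_act S hS g⁻¹ (R.chain_dist S hS (R.act g m) (R.act g m')))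
  rwa [R.act_inv_act, R.act_inv_act] at h

lemma mem_actClos (hS : R.IsRightGenSet S) {g : G} {A : Set M} {θ : ℕ} {x b : M}
    (hb : b ∈ A) (h1 : R.dist S x (R.act g b) ≤ θ) :
    x ∈ (fun a => R.act g a) '' R.clos S A θ := by
  refine ⟨R.act g⁻¹ x, ⟨b, ?_, hb⟩, R.act_act_inv g x⟩
  show R.dist S (R.act g⁻¹ x) b ≤ θ
  have h2 : R.dist S (R.act g⁻¹ x) (R.act g⁻¹ (R.act g b)) ≤ θ := by
    rw [R.dist_act S hS]; exact h1
  rwa [R.act_inv_act] at h2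

lemma mem_nActClos (hS : R.IsRightGenSet S) {t : M} {A : Set M} {θ : ℕ} {y b : M}
    (hb : b ∈ A) (h1 : R.dist S y (R.nAct t b) ≤ θ) :
    y ∈ (fun a : M => R.nAct t a) '' R.clos S A θ := by
  have he : (fun a : M => R.nAct t a) = fun a => R.act (R.coord t) a :=
    funext fun a => R.nAct_eq t a
  rw [he]
  rw [R.nAct_eq] at h1
  exact R.mem_actClos S hS hb h1

end CellSpace

lemma shift_mem (R : CellSpace G M) {H : Subgroup G} {X : Set (M → Q)}
    (hX : IsSubshift R H X) {h : G} (hh : h ∈ H) {x : M → Q} (hx : x ∈ X) :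
    shiftAct R h x ∈ X := by
  obtain ⟨𝔉, -, rfl⟩ := hX
  intro f hf hocc
  obtain ⟨h', hh', heq⟩ := hocc
  refine hx f hf ⟨h⁻¹ * h', mul_mem (inv_mem hh) hh', fun a => ?_⟩
  have := heq a
  simpa [shiftAct, R.mul_act] using this

theorem stmt16
    [Finite Q] (R : CellSpace G M) (S : Set G) (hS : R.IsRightGenSet S)
    (H : Subgroup G) (hH : ∀ m : M, R.coord m ∈ H)
    (X : Set (M → Q)) (κ : ℕ) (hX : IsSubshift R H X) (hstep : IsStep R S H X κ)
    (Y : Set (M → Q)) (hY : IsSubshift R H Y)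
    (Δ : (M → Q) → (M → Q)) (hΔ : IsLocalMap R S H X Y Δ κ)
    (A : Set M) (p p' : (R.clos S A (2 * κ) : Set M) → Q)
    (hp : p ∈ restr (R.clos S A (2 * κ)) X)
    (hp' : p' ∈ restr (R.clos S A (2 * κ)) X)
    (hagree : ∀ (m : M) (hm : m ∈ R.clos S A (2 * κ)), m ∉ A →
      p ⟨m, hm⟩ = p' ⟨m, hm⟩)
    (hΔeq : ∀ c ∈ X, ∀ c' ∈ X,
      Set.restrict (R.clos S A (2 * κ)) c = p →
      Set.restrict (R.clos S A (2 * κ)) c' = p' →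
      ∀ m ∈ R.inter S (R.clos S A (2 * κ)) κ, Δ c m = Δ c' m)
    (c : M → Q) (hc : c ∈ X)
    (T : Set M)
    (hdisj : ∀ t ∈ T, ∀ t' ∈ T, t ≠ t' →
      Disjoint ((fun a : M => R.nAct t a) '' R.clos S A (2 * κ))
        ((fun a : M => R.nAct t' a) '' R.clos S A (2 * κ)))
    (hocc : ∀ t ∈ T, OccursAt R p t c)
    (c' : M → Q)
    (hc'1 : ∀ m : M,
      m ∉ ⋃ t ∈ T, (fun a : M => R.nAct t a) '' R.clos S A (2 * κ) → c' m = c m)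
    (hc'2 : ∀ t ∈ T, ∀ a : (R.clos S A (2 * κ) : Set M), c' (R.nAct t ↑a) = p' a) :
    (∀ t ∈ T, OccursAt R p' t c') ∧ c' ∈ X ∧ Δ c = Δ c' ∧
      (p ≠ p' → ∀ t ∈ T, ¬ OccursAt R p t c') := by
  classical
  obtain ⟨hmaps, N, hNball, hNstab, δ, hδinv, hδ⟩ := hΔ
  obtain ⟨x, hx, hxp⟩ := hp
  obtain ⟨x', hx', hx'p⟩ := hp'
  obtain ⟨𝔉₂, h𝔉₂, hXeq⟩ := hstep
  have hact : ∀ t n : M, R.nAct t n = R.act (R.coord t) n := R.nAct_eq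
  -- c agrees with the shift of x on the tile at t
  have hcx : ∀ t ∈ T, ∀ m ∈ (fun a : M => R.nAct t a) '' R.clos S A (2 * κ),
      c m = shiftAct R (R.coord t) x m := by
    intro t ht m hm
    obtain ⟨a, ha, rfl⟩ := hm
    show c (R.nAct t a) = x (R.act (R.coord t)⁻¹ (R.nAct t a))
    rw [hocc t ht ⟨a, ha⟩, hact, R.act_inv_act]
    exact (congrFun hxp ⟨a, ha⟩).symm
  have hc'x' : ∀ t ∈ T, ∀ m ∈ (fun a : M => R.nAct t a) '' R.clos S A (2 * κ),
      c' m = shiftAct R (R.coord t) x' m := by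
    intro t ht m hm
    obtain ⟨a, ha, rfl⟩ := hm
    show c' (R.nAct t a) = x' (R.act (R.coord t)⁻¹ (R.nAct t a))
    rw [hc'2 t ht ⟨a, ha⟩, hact, R.act_inv_act]
    exact (congrFun hx'p ⟨a, ha⟩).symm
  -- c' agrees with c away from the copies of A
  have hF1 : ∀ m : M, (∀ t ∈ T, ∀ a ∈ A, m ≠ R.nAct t a) → c' m = c m := by
    intro m hma
    by_cases hm : m ∈ ⋃ t ∈ T, (fun a : M => R.nAct t a) '' R.clos S A (2 * κ)
    · simp only [Set.mem_iUnion, exists_prop] at hm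
      obtain ⟨t, ht, a, ha, rfl⟩ := hm
      have hA : a ∉ A := fun h => hma t ht a h rfl
      rw [hc'2 t ht ⟨a, ha⟩, ← hagree a ha hA]
      exact (hocc t ht ⟨a, ha⟩).symm
    · exact hc'1 m hm
  -- c' is a point of X
  have hc'X : c' ∈ X := by
    rw [hXeq]
    intro f hf hso
    obtain ⟨h, hh, heq⟩ := hso
    by_cases hcase : ∃ t ∈ T, ∃ a ∈ A, ∃ b : f.1, R.act h ↑b = R.nAct t a
    · obtain ⟨t, ht, a, haA, b, hb⟩ := hcase
      have hx'X : shiftAct R (R.coord t) x' ∈ X := shift_mem R hX (hH t) hx'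
      rw [hXeq] at hx'X
      refine hx'X f hf ⟨h, hh, fun a' => ?_⟩
      rw [← heq a']
      have hmem : R.act h ↑a' ∈ (fun a : M => R.nAct t a) '' R.clos S A (2 * κ) := by
        have hsub : f.1 ⊆ R.ball S R.m0 κ := (h𝔉₂ f hf).subset
        have hb' : R.dist S R.m0 ↑b ≤ κ := hsub b.2
        have ha' : R.dist S R.m0 ↑a' ≤ κ := hsub a'.2
        refine R.mem_nActClos S hS haA ?_
        rw [← hb]
        have hd : R.dist S (R.act h ↑a') (R.act h ↑b) ≤ 2 * κ := by
          rw [R.dist_act S hS]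
          calc R.dist S (↑a' : M) ↑b ≤ R.dist S ↑a' R.m0 + R.dist S R.m0 ↑b :=
              R.dist_triangle S hS _ _ _
            _ ≤ κ + κ := add_le_add (by rw [← R.dist_symm S hS]; exact ha') hb'
            _ = 2 * κ := by ring
        exact hd
      obtain ⟨a'', ha'', he''⟩ := hmem
      rw [← he'']
      show shiftAct R (R.coord t) x' (R.nAct t a'') = c' (R.nAct t a'')
      exact (hc'x' t ht _ ⟨a'', ha'', rfl⟩).symm
    · push_neg at hcase
      have hcG := hc
      rw [hXeq] at hcG
      refine hcG f hf ⟨h, hh, fun b => ?_⟩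
      rw [← heq b]
      exact (hF1 (R.act h ↑b) (fun t ht a haA => hcase t ht a haA b)).symm
  -- distance from m to m ↝ n is at most κ for n ∈ N
  have hdn : ∀ (m : M) (n : N), R.dist S m (R.nAct m ↑n) ≤ κ := by
    intro m n
    have h1 : R.dist S (R.act (R.coord m) R.m0) (R.act (R.coord m) ↑n) ≤ κ := by
      rw [R.dist_act S hS]; exact hNball n.2
    rwa [R.coord_act, ← hact] at h1
  -- equivariance of Δ
  have hequiv : ∀ g ∈ H, ∀ z ∈ X, shiftAct R g z ∈ X → ∀ m : M,
      Δ (shiftAct R g z) m = Δ z (R.act g⁻¹ m) := by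
    intro g hg z hz hgz m
    rw [hδ _ hgz m, hδ _ hz (R.act g⁻¹ m)]
    set m' := R.act g⁻¹ m with hm'
    set h₀ := (R.coord m')⁻¹ * g⁻¹ * R.coord m with hh₀
    have hstab : R.stab h₀ := by
      show R.act h₀ R.m0 = R.m0
      rw [hh₀, R.mul_act, R.mul_act, R.coord_act, ← hm']
      exact R.act_coord_inv m'
    have hstabinv : R.stab h₀⁻¹ := by
      show R.act h₀⁻¹ R.m0 = R.m0
      have h := R.act_inv_act h₀ R.m0
      rwa [hstab] at h
    have hmemH : h₀ ∈ H := by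
      rw [hh₀]
      exact mul_mem (mul_mem (inv_mem (hH m')) (inv_mem hg)) (hH m)
    have hℓmem : (fun n : N => z (R.nAct m' ↑n)) ∈ restr N X := by
      refine ⟨shiftAct R (R.coord m')⁻¹ z, shift_mem R hX (inv_mem (hH m')) hz, ?_⟩
      funext n
      show z (R.act ((R.coord m')⁻¹)⁻¹ ↑n) = z (R.nAct m' ↑n)
      rw [inv_inv, hact]
    refine hδinv h₀⁻¹ (inv_mem hmemH) hstabinv _ hℓmem _ ?_
    intro n hn hn'
    show z (R.act g⁻¹ (R.nAct m n)) = z (R.nAct m' (R.act h₀⁻¹⁻¹ n))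
    rw [inv_inv, hact, hact, ← R.mul_act, ← R.mul_act]
    congr 2
    rw [hh₀, hm']
    group
  -- Δ c = Δ c'
  have hΔcc' : Δ c = Δ c' := by
    funext m
    rw [hδ c hc m, hδ c' hc'X m]
    by_cases hcase : ∃ t ∈ T, ∃ a ∈ A, ∃ n : N, R.nAct m ↑n = R.nAct t a
    · obtain ⟨t, ht, a, haA, n₀, hn₀⟩ := hcase
      have hmem : ∀ n : N, R.nAct m ↑n ∈ (fun a : M => R.nAct t a) '' R.clos S A (2 * κ) := by
        intro n
        refine R.mem_nActClos S hS haA ?_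
        rw [← hn₀]
        calc R.dist S (R.nAct m ↑n) (R.nAct m ↑n₀)
            ≤ R.dist S (R.nAct m ↑n) m + R.dist S m (R.nAct m ↑n₀) :=
              R.dist_triangle S hS _ _ _
          _ ≤ κ + κ := add_le_add (by rw [← R.dist_symm S hS]; exact hdn m n) (hdn m n₀)
          _ = 2 * κ := by ring
      have hgx : shiftAct R (R.coord t) x ∈ X := shift_mem R hX (hH t) hx
      have hgx' : shiftAct R (R.coord t) x' ∈ X := shift_mem R hX (hH t) hx'
      have e1 : (fun n : N => c (R.nAct m ↑n)) =
          fun n : N => shiftAct R (R.coord t) x (R.nAct m ↑n) :=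
        funext fun n => hcx t ht _ (hmem n)
      have e2 : (fun n : N => c' (R.nAct m ↑n)) =
          fun n : N => shiftAct R (R.coord t) x' (R.nAct m ↑n) :=
        funext fun n => hc'x' t ht _ (hmem n)
      rw [e1, e2, ← hδ _ hgx m, ← hδ _ hgx' m,
        hequiv _ (hH t) x hx hgx m, hequiv _ (hH t) x' hx' hgx' m]
      apply hΔeq x hx x' hx' hxp hx'p
      have hd' : R.dist S (R.act (R.coord t)⁻¹ m) a ≤ κ := by
        have h1 : R.dist S (R.act (R.coord t)⁻¹ m)
            (R.act (R.coord t)⁻¹ (R.nAct m ↑n₀)) ≤ κ := by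
          rw [R.dist_act S hS]; exact hdn m n₀
        rwa [hn₀, hact, R.act_inv_act] at h1
      have hmem1 : ∀ y : M, R.dist S y a ≤ 2 * κ → y ∈ R.clos S A (2 * κ) :=
        fun y hy => ⟨a, hy, haA⟩
      show R.act (R.coord t)⁻¹ m ∈ R.clos S A (2 * κ) ∧
        R.ball S (R.act (R.coord t)⁻¹ m) κ ⊆ R.clos S A (2 * κ)
      refine ⟨hmem1 _ (le_trans hd' (by omega)), fun y hy => hmem1 y ?_⟩
      calc R.dist S y a
            ≤ R.dist S y (R.act (R.coord t)⁻¹ m) + R.dist S (R.act (R.coord t)⁻¹ m) a :=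
              R.dist_triangle S hS _ _ _
          _ ≤ κ + κ := add_le_add (by rw [← R.dist_symm S hS]; exact hy) hd'
          _ ≤ 2 * κ := by omega
    · push_neg at hcase
      congr 1
      funext n
      exact (hF1 (R.nAct m ↑n) (fun t ht a haA => hcase t ht a haA n)).symm
  exact ⟨fun t ht => hc'2 t ht, hc'X, hΔcc', fun hne t ht hocc' => hne (funext fun a => by
    rw [← hocc' a]; exact hc'2 t ht a)⟩

end GoE
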